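/- Let T_1,…,T_M ∈ ℝ^{TL×TL} (M ≥ 2) be diagonal matrices satisfying the block linear independence condition. Let W_1, W_2 ⊆ ℝ^{TL} be subspaces with dim W_1 = D_1 and dim W_2 = D_2 such that W_1 ⊆ c_{T_3} c_{T_4} ⋯ c_{T_M} W_2, sp^{(T)}_N(W_1) ≥ 2N − α for all N where α > 0, D_1 − D_2/2 − α/2 ≥ 4, and Δ_{T_1} W_1 ≤ 8εTL and Δ_{T_2} W_2 ≤ 8εTL. Then L³ ≥ 2^{M−10}·ε^{−2}·T^{−2}·(D_1 − D_2/2 − α/2)². -/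

import Mathlib

open Matrix Submodule Module

/-- `sp^{(T)}(V) = ∑_{k=1}^L dim(P_k V)`. -/
noncomputable def spT (T L : ℕ) (V : Submodule ℝ (Fin T × Fin L → ℝ)) : ℕ :=
  ∑ k : Fin L, finrank ℝ ↥(V.map (LinearMap.funLeft ℝ ℝ (fun s : Fin T => (s, k))))

/-- The block `N`-sparsity `sp^{(T)}_N(V) = min{sp^{(T)}(W) : W ≤ V, dim W ≥ N}` (in `ℕ∞`). -/
noncomputable def spTN (T L : ℕ) (N : ℕ) (V : Submodule ℝ (Fin T × Fin L → ℝ)) : ℕ∞ :=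
  ⨅ (W : Submodule ℝ (Fin T × Fin L → ℝ)) (_ : W ≤ V) (_ : N ≤ finrank ℝ ↥W),
    (spT T L W : ℕ∞)

/-- The block diagonal matrix `I_T ⊗ diag(d)` on `ℝ^{T×L}`. -/
def blockDiag (T L : ℕ) (d : Fin L → ℝ) : Matrix (Fin T × Fin L) (Fin T × Fin L) ℝ :=
  Matrix.diagonal fun p => d p.2

/-- The block linear independence condition. -/
def BlockLinIndepCond (T L M : ℕ) (t : Fin M → Fin L → ℝ) : Prop :=
  ∀ A : Finset (Fin M → ℤ), A.card = L →
    ∀ V : Submodule ℝ (Fin T × Fin L → ℝ),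
      finrank ℝ ↥(⨆ x ∈ A, V.map (Matrix.toLin'
        (blockDiag T L fun ℓ => ∏ i, t i ℓ ^ x i))) = spT T L V

/-- The extension of a subspace `V` under a matrix `A`: `e_A V = V + A V`. -/
noncomputable def extT {n : Type*} [Fintype n] [DecidableEq n] (A : Matrix n n ℝ)
    (V : Submodule ℝ (n → ℝ)) : Submodule ℝ (n → ℝ) :=
  V ⊔ V.map (Matrix.toLin' A)

/-- The contraction of a subspace `V` under a matrix `A`: `c_A V = V ∩ A V`. -/
noncomputable def conT {n : Type*} [Fintype n] [DecidableEq n] (A : Matrix n n ℝ)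
    (V : Submodule ℝ (n → ℝ)) : Submodule ℝ (n → ℝ) :=
  V ⊓ V.map (Matrix.toLin' A)

/-- The alignment width `Δ_A V = dim(e_A V) − dim V`. -/
noncomputable def widthT {n : Type*} [Fintype n] [DecidableEq n] (A : Matrix n n ℝ)
    (V : Submodule ℝ (n → ℝ)) : ℕ :=
  finrank ℝ ↥(extT A V) - finrank ℝ ↥V

/-- The average alignment width `Δ̄ V = (1/M) ∑_j Δ_{T_j} V`. -/
noncomputable def avgW {n : Type*} [Fintype n] [DecidableEq n] {M : ℕ}
    (Ts : Fin M → Matrix n n ℝ) (V : Submodule ℝ (n → ℝ)) : ℝ :=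
  (∑ j, (widthT (Ts j) V : ℝ)) / M

/-! ### Auxiliary machinery -/

section auxBD
variable {T L : ℕ}

/-- The linear map on `ℝ^{T×L}` given by the block diagonal matrix of `d`. -/
noncomputable def bd (T L : ℕ) (d : Fin L → ℝ) :
    (Fin T × Fin L → ℝ) →ₗ[ℝ] (Fin T × Fin L → ℝ) :=
  Matrix.toLin' (blockDiag T L d)

lemma bd_mul (d d' : Fin L → ℝ) : bd T L (d * d') = (bd T L d).comp (bd T L d') := by
  rw [bd, bd, bd, ← Matrix.toLin'_mul]
  congr 1
  simp [_root_.blockDiag, Matrix.diagonal_mul_diagonal]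

lemma bd_one : bd T L (1 : Fin L → ℝ) = LinearMap.id := by
  rw [bd]
  have : _root_.blockDiag T L (1 : Fin L → ℝ) = 1 := by
    rw [_root_.blockDiag, ← Matrix.diagonal_one]; rfl
  rw [this, Matrix.toLin'_one]

lemma bd_map_map (d : Fin L → ℝ) (hd : ∀ ℓ, d ℓ ≠ 0) (V : Submodule ℝ (Fin T × Fin L → ℝ)) :
    (V.map (bd T L d⁻¹)).map (bd T L d) = V := by
  rw [← Submodule.map_comp, ← bd_mul]
  have : d * d⁻¹ = 1 := by funext ℓ; simp [mul_inv_cancel₀ (hd ℓ)]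
  rw [this, bd_one, Submodule.map_id]

lemma bd_map_map' (d : Fin L → ℝ) (hd : ∀ ℓ, d ℓ ≠ 0) (V : Submodule ℝ (Fin T × Fin L → ℝ)) :
    (V.map (bd T L d)).map (bd T L d⁻¹) = V := by
  have h := bd_map_map (T := T) d⁻¹ (fun ℓ => inv_ne_zero (hd ℓ)) V
  rwa [inv_inv] at h

/-- The linear equivalence given by an invertible block diagonal matrix. -/
noncomputable def bdE (T L : ℕ) (d : Fin L → ℝ) (hd : ∀ ℓ, d ℓ ≠ 0) :
    (Fin T × Fin L → ℝ) ≃ₗ[ℝ] (Fin T × Fin L → ℝ) :=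
  LinearEquiv.ofLinear (bd T L d) (bd T L d⁻¹)
    (by rw [← bd_mul]
        have : d * d⁻¹ = 1 := by funext ℓ; simp [mul_inv_cancel₀ (hd ℓ)]
        rw [this, bd_one])
    (by rw [← bd_mul]
        have : d⁻¹ * d = 1 := by funext ℓ; simp [inv_mul_cancel₀ (hd ℓ)]
        rw [this, bd_one])

lemma finrank_map_bd (d : Fin L → ℝ) (hd : ∀ ℓ, d ℓ ≠ 0) (V : Submodule ℝ (Fin T × Fin L → ℝ)) :
    finrank ℝ (V.map (bd T L d)) = finrank ℝ V := by
  have : bd T L d = (bdE T L d hd : (Fin T × Fin L → ℝ) →ₗ[ℝ] (Fin T × Fin L → ℝ)) := rfl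
  rw [this]
  exact LinearEquiv.finrank_map_eq _ _

/-- `capSeq d W k = W ∩ d⁻¹ W ∩ ⋯ ∩ d⁻ᵏ W`. -/
noncomputable def capSeq (T L : ℕ) (d : Fin L → ℝ) (W : Submodule ℝ (Fin T × Fin L → ℝ)) :
    ℕ → Submodule ℝ (Fin T × Fin L → ℝ)
  | 0 => W
  | k + 1 => W ⊓ (capSeq T L d W k).map (bd T L d⁻¹)

/-- `sumSeq d W k = W + d W + ⋯ + d^(k-1) W`. -/
noncomputable def sumSeq (T L : ℕ) (d : Fin L → ℝ) (W : Submodule ℝ (Fin T × Fin L → ℝ)) :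
    ℕ → Submodule ℝ (Fin T × Fin L → ℝ)
  | 0 => ⊥
  | k + 1 => W ⊔ (sumSeq T L d W k).map (bd T L d)

lemma capSeq_le (d : Fin L → ℝ) (W : Submodule ℝ (Fin T × Fin L → ℝ)) (k : ℕ) :
    capSeq T L d W k ≤ W := by
  cases k with
  | zero => exact le_rfl
  | succ k => exact inf_le_left

lemma capSeq_map_pow (d : Fin L → ℝ) (hd : ∀ ℓ, d ℓ ≠ 0)
    (W : Submodule ℝ (Fin T × Fin L → ℝ)) :
    ∀ m k : ℕ, m ≤ k → (capSeq T L d W k).map (bd T L (d ^ m)) ≤ W := by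
  intro m
  induction m with
  | zero =>
    intro k _
    rw [pow_zero, bd_one, Submodule.map_id]
    exact capSeq_le d W k
  | succ m ih =>
    intro k hk
    obtain ⟨j, rfl⟩ : ∃ j, k = j + 1 := ⟨k - 1, by omega⟩
    have h1 : capSeq T L d W (j + 1) ≤ (capSeq T L d W j).map (bd T L d⁻¹) := inf_le_right
    calc (capSeq T L d W (j + 1)).map (bd T L (d ^ (m + 1)))
        ≤ ((capSeq T L d W j).map (bd T L d⁻¹)).map (bd T L (d ^ (m + 1))) :=
          Submodule.map_mono h1
      _ = (capSeq T L d W j).map (bd T L (d ^ m)) := by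
          have hdd : d ^ (m + 1) * d⁻¹ = d ^ m := by
            funext ℓ
            simp [pow_succ, mul_assoc, mul_inv_cancel₀ (hd ℓ)]
          rw [← Submodule.map_comp, ← bd_mul, hdd]
      _ ≤ W := ih j (by omega)

lemma capSeq_finrank (d : Fin L → ℝ) (hd : ∀ ℓ, d ℓ ≠ 0)
    (W : Submodule ℝ (Fin T × Fin L → ℝ)) (k : ℕ) :
    (finrank ℝ W : ℝ) - k * ((finrank ℝ ↥(W ⊔ W.map (bd T L d)) : ℝ) - finrank ℝ W)
      ≤ finrank ℝ (capSeq T L d W k) := by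
  induction k with
  | zero => simp [capSeq]; exact le_of_eq rfl
  | succ k ih =>
    have hdi : ∀ ℓ, d⁻¹ ℓ ≠ 0 := fun ℓ => inv_ne_zero (hd ℓ)
    set X := (capSeq T L d W k).map (bd T L d⁻¹) with hX
    have h1 : finrank ℝ ↥(W ⊔ X) + finrank ℝ ↥(W ⊓ X) = finrank ℝ W + finrank ℝ X :=
      Submodule.finrank_sup_add_finrank_inf_eq W X
    have h2 : finrank ℝ X = finrank ℝ (capSeq T L d W k) := finrank_map_bd d⁻¹ hdi _
    have h3 : finrank ℝ ↥(W ⊔ X) ≤ finrank ℝ ↥(W ⊔ W.map (bd T L d⁻¹)) :=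
      Submodule.finrank_mono (sup_le_sup_left (Submodule.map_mono (capSeq_le d W k)) W)
    have h4 : finrank ℝ ↥(W ⊔ W.map (bd T L d⁻¹)) = finrank ℝ ↥(W ⊔ W.map (bd T L d)) := by
      conv_lhs => rw [← finrank_map_bd d hd (W ⊔ W.map (bd T L d⁻¹))]
      rw [Submodule.map_sup, bd_map_map d hd, sup_comm]
    have h5 : capSeq T L d W (k + 1) = W ⊓ X := rfl
    rw [h5]
    rw [h2] at h1
    rw [h4] at h3
    have r1 : (finrank ℝ ↥(W ⊔ X) : ℝ) + finrank ℝ ↥(W ⊓ X)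
        = finrank ℝ W + finrank ℝ (capSeq T L d W k) := by exact_mod_cast h1
    have r3 : (finrank ℝ ↥(W ⊔ X) : ℝ) ≤ finrank ℝ ↥(W ⊔ W.map (bd T L d)) := by
      exact_mod_cast h3
    push_cast
    linarith

lemma sumSeq_map_pow (d : Fin L → ℝ) (W : Submodule ℝ (Fin T × Fin L → ℝ)) :
    ∀ m k : ℕ, m < k → W.map (bd T L (d ^ m)) ≤ sumSeq T L d W k := by
  intro m
  induction m with
  | zero =>
    intro k hk
    obtain ⟨j, rfl⟩ : ∃ j, k = j + 1 := ⟨k - 1, by omega⟩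
    rw [pow_zero, bd_one, Submodule.map_id]
    exact le_sup_left
  | succ m ih =>
    intro k hk
    obtain ⟨j, rfl⟩ : ∃ j, k = j + 1 := ⟨k - 1, by omega⟩
    calc W.map (bd T L (d ^ (m + 1)))
        = (W.map (bd T L (d ^ m))).map (bd T L d) := by
          rw [pow_succ', bd_mul, Submodule.map_comp]
      _ ≤ (sumSeq T L d W j).map (bd T L d) := Submodule.map_mono (ih j (by omega))
      _ ≤ sumSeq T L d W (j + 1) := le_sup_right

lemma le_sumSeq (d : Fin L → ℝ) (W : Submodule ℝ (Fin T × Fin L → ℝ)) (k : ℕ) :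
    W ≤ sumSeq T L d W (k + 1) := le_sup_left

lemma sumSeq_finrank (d : Fin L → ℝ) (hd : ∀ ℓ, d ℓ ≠ 0)
    (W : Submodule ℝ (Fin T × Fin L → ℝ)) (k : ℕ) :
    (finrank ℝ (sumSeq T L d W (k + 1)) : ℝ)
      ≤ finrank ℝ W + k * ((finrank ℝ ↥(W ⊔ W.map (bd T L d)) : ℝ) - finrank ℝ W) := by
  induction k with
  | zero =>
    have : sumSeq T L d W 1 = W := by
      show W ⊔ (⊥ : Submodule ℝ (Fin T × Fin L → ℝ)).map (bd T L d) = W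
      rw [Submodule.map_bot, sup_bot_eq]
    rw [this]
    simp
  | succ k ih =>
    set P := sumSeq T L d W (k + 1) with hP
    have h0 : sumSeq T L d W (k + 2) = W ⊔ P.map (bd T L d) := rfl
    have h1 : finrank ℝ ↥(W ⊔ P.map (bd T L d)) + finrank ℝ ↥(W ⊓ P.map (bd T L d))
        = finrank ℝ W + finrank ℝ (P.map (bd T L d)) :=
      Submodule.finrank_sup_add_finrank_inf_eq _ _
    have h2 : finrank ℝ (P.map (bd T L d)) = finrank ℝ P := finrank_map_bd d hd _
    have h3 : finrank ℝ ↥(W ⊓ W.map (bd T L d)) ≤ finrank ℝ ↥(W ⊓ P.map (bd T L d)) :=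
      Submodule.finrank_mono (inf_le_inf_left _ (Submodule.map_mono (le_sumSeq d W k)))
    have h4 : finrank ℝ ↥(W ⊔ W.map (bd T L d)) + finrank ℝ ↥(W ⊓ W.map (bd T L d))
        = finrank ℝ W + finrank ℝ (W.map (bd T L d)) :=
      Submodule.finrank_sup_add_finrank_inf_eq _ _
    have h5 : finrank ℝ (W.map (bd T L d)) = finrank ℝ W := finrank_map_bd d hd _
    rw [h0]
    rw [h2] at h1
    rw [h5] at h4
    have r1 : (finrank ℝ ↥(W ⊔ P.map (bd T L d)) : ℝ) + finrank ℝ ↥(W ⊓ P.map (bd T L d))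
        = finrank ℝ W + finrank ℝ P := by exact_mod_cast h1
    have r3 : (finrank ℝ ↥(W ⊓ W.map (bd T L d)) : ℝ) ≤ finrank ℝ ↥(W ⊓ P.map (bd T L d)) := by
      exact_mod_cast h3
    have r4 : (finrank ℝ ↥(W ⊔ W.map (bd T L d)) : ℝ) + finrank ℝ ↥(W ⊓ W.map (bd T L d))
        = finrank ℝ W + finrank ℝ W := by exact_mod_cast h4
    push_cast
    linarith

end auxBD

lemma chain_lem {T L M : ℕ} (t : Fin M → Fin L → ℝ) (hnz : ∀ i ℓ, t i ℓ ≠ 0)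
    (Ts : Fin M → Matrix (Fin T × Fin L) (Fin T × Fin L) ℝ)
    (hTs : ∀ j, Ts j = blockDiag T L (t j)) :
    ∀ (lst : List (Fin M)) (V W : Submodule ℝ (Fin T × Fin L → ℝ)),
      V ≤ lst.foldr (fun j acc => conT (Ts j) acc) W →
      ∀ B : Finset (Fin M), (∀ j ∈ B, j ∈ lst) →
      V.map (bd T L (∏ j ∈ B, (t j)⁻¹)) ≤ W := by
  intro lst
  induction lst with
  | nil =>
    intro V W h B hB
    have hBe : B = ∅ := Finset.eq_empty_of_forall_notMem (fun j hj => by simpa using hB j hj)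
    subst hBe
    rw [Finset.prod_empty, bd_one, Submodule.map_id]
    exact h
  | cons j lst ih =>
    intro V W h B hB
    have h' : V ≤ conT (Ts j) (lst.foldr (fun j acc => conT (Ts j) acc) W) := h
    set F := lst.foldr (fun j acc => conT (Ts j) acc) W with hF
    by_cases hj : j ∈ B
    · have h2 : V ≤ F.map (bd T L (t j)) := by
        have h2' := h'.trans inf_le_right
        rwa [hTs j] at h2'
      have h3 : V.map (bd T L (t j)⁻¹) ≤ F := by
        calc V.map (bd T L (t j)⁻¹)
            ≤ (F.map (bd T L (t j))).map (bd T L (t j)⁻¹) := Submodule.map_mono h2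
          _ = F := bd_map_map' (t j) (hnz j) F
      have h4 := ih (V.map (bd T L (t j)⁻¹)) W h3 (B.erase j)
        (fun i hi => by
          have hij := Finset.ne_of_mem_erase hi
          have hiB := Finset.mem_of_mem_erase hi
          exact (List.mem_cons.1 (hB i hiB)).resolve_left hij)
      have hprod : (∏ i ∈ B, (t i)⁻¹) = (∏ i ∈ B.erase j, (t i)⁻¹) * (t j)⁻¹ := by
        rw [← Finset.mul_prod_erase B _ hj, mul_comm]
      rw [hprod, bd_mul, Submodule.map_comp]
      exact h4
    · exact ih V W (h'.trans inf_le_left) B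
        (fun i hi => (List.mem_cons.1 (hB i hi)).resolve_left
          (by rintro rfl; exact hj hi))

/-- index-vector encoding of a grid point -/
def encV (M : ℕ) (hM : 2 ≤ M) (p : ℕ × ℕ × Finset (Fin M)) : Fin M → ℤ := fun i =>
  if i = ⟨0, by omega⟩ then (p.1 : ℤ)
  else if i = ⟨1, by omega⟩ then (p.2.1 : ℤ)
  else if i ∈ p.2.2 then -1 else 0

lemma encV_inj {M : ℕ} (hM : 2 ≤ M) (p q : ℕ × ℕ × Finset (Fin M))
    (hp : ∀ j ∈ p.2.2, 2 ≤ j.val) (hq : ∀ j ∈ q.2.2, 2 ≤ j.val)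
    (h : encV M hM p = encV M hM q) : p = q := by
  have hi0 : (⟨0, by omega⟩ : Fin M) ≠ ⟨1, by omega⟩ := by simp [Fin.ext_iff]
  have h0 := congrFun h ⟨0, by omega⟩
  simp [encV, Fin.ext_iff] at h0
  have h1 := congrFun h ⟨1, by omega⟩
  simp [encV, Fin.ext_iff] at h1
  have h2 : p.2.2 = q.2.2 := by
    ext a
    by_cases ha : 2 ≤ a.val
    · have hne0 : a ≠ ⟨0, by omega⟩ := by simp [Fin.ext_iff]; omega
      have hne1 : a ≠ ⟨1, by omega⟩ := by simp [Fin.ext_iff]; omega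
      have h3 := congrFun h a
      simp only [encV, if_neg hne0, if_neg hne1] at h3
      by_cases hap : a ∈ p.2.2 <;> by_cases haq : a ∈ q.2.2 <;>
        simp [hap, haq] at h3 <;> tauto
    · constructor
      · intro hmem; exact absurd (hp a hmem) ha
      · intro hmem; exact absurd (hq a hmem) ha
  exact Prod.ext h0 (Prod.ext h1 h2)

lemma card_chainIdx {M : ℕ} (hM : 2 ≤ M) :
    (Finset.univ.filter (fun i : Fin M => 2 ≤ i.val)).card = M - 2 := by
  have himg : (Finset.univ.filter fun i : Fin M => 2 ≤ i.val)
      = Finset.image (fun k : Fin (M - 2) => (⟨k.val + 2, by omega⟩ : Fin M)) Finset.univ := by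
    ext i
    simp only [Finset.mem_filter, Finset.mem_univ, true_and, Finset.mem_image]
    constructor
    · intro hi
      exact ⟨⟨i.val - 2, by omega⟩, by ext; simp; omega⟩
    · rintro ⟨k, rfl⟩; simp
  rw [himg, Finset.card_image_of_injective _ (fun a b hab => by
    have := congrArg Fin.val hab
    simp at this
    exact Fin.ext this), Finset.card_univ, Fintype.card_fin]

lemma gridProd {T L M : ℕ} (hM : 2 ≤ M) (t : Fin M → Fin L → ℝ)
    (m1 m2 : ℕ) (B : Finset (Fin M)) (hB : ∀ j ∈ B, 2 ≤ j.val) :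
    (fun ℓ => ∏ i, t i ℓ ^ (encV M hM (m1, m2, B) i))
      = (t ⟨1, by omega⟩) ^ m2 * ((∏ j ∈ B, (t j)⁻¹) * (t ⟨0, by omega⟩) ^ m1) := by
  funext ℓ
  have hi0 : (⟨0, by omega⟩ : Fin M) ≠ ⟨1, by omega⟩ := by simp [Fin.ext_iff]
  have hi0B : (⟨0, by omega⟩ : Fin M) ∉ B := fun h => by have := hB _ h; simp at this
  have hi1B : (⟨1, by omega⟩ : Fin M) ∉ B := fun h => by have := hB _ h; simp at this
  have hsub : insert (⟨0, by omega⟩ : Fin M) (insert ⟨1, by omega⟩ B) ⊆ Finset.univ :=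
    Finset.subset_univ _
  have hout : ∀ i ∈ Finset.univ, i ∉ insert (⟨0, by omega⟩ : Fin M) (insert ⟨1, by omega⟩ B) →
      t i ℓ ^ (encV M hM (m1, m2, B) i) = 1 := by
    intro i _ hi
    simp only [Finset.mem_insert, not_or] at hi
    rw [encV]
    simp only [if_neg hi.1, if_neg hi.2.1, if_neg hi.2.2]
    exact zpow_zero _
  rw [← Finset.prod_subset hsub hout]
  rw [Finset.prod_insert (by simp [Finset.mem_insert, hi0, hi0B]),
    Finset.prod_insert hi1B]
  have v0 : t ⟨0, by omega⟩ ℓ ^ (encV M hM (m1, m2, B) ⟨0, by omega⟩) = t ⟨0, by omega⟩ ℓ ^ m1 := by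
    rw [encV]; simp only [if_pos rfl]; exact zpow_natCast _ _
  have v1 : t ⟨1, by omega⟩ ℓ ^ (encV M hM (m1, m2, B) ⟨1, by omega⟩) = t ⟨1, by omega⟩ ℓ ^ m2 := by
    rw [encV]; simp only [if_neg hi0.symm, if_pos rfl]; exact zpow_natCast _ _
  have vB : ∏ i ∈ B, t i ℓ ^ (encV M hM (m1, m2, B) i) = ∏ i ∈ B, (t i ℓ)⁻¹ := by
    refine Finset.prod_congr rfl fun i hi => ?_
    have h2 := hB i hi
    have hne0 : i ≠ ⟨0, by omega⟩ := by simp [Fin.ext_iff]; omega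
    have hne1 : i ≠ ⟨1, by omega⟩ := by simp [Fin.ext_iff]; omega
    rw [encV]
    simp only [if_neg hne0, if_neg hne1, if_pos hi]
    exact zpow_neg_one _
  rw [v0, v1, vB]
  simp only [Pi.mul_apply, Pi.pow_apply, Finset.prod_apply, Pi.inv_apply]
  ring

lemma mem_drop_finRange {M : ℕ} (j : Fin M) (hj : 2 ≤ j.val) :
    j ∈ (List.finRange M).drop 2 := by
  rw [List.mem_iff_getElem]
  refine ⟨j.val - 2, by simp [List.length_finRange]; omega, ?_⟩
  rw [List.getElem_drop, List.getElem_finRange]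
  ext
  simp
  omega

/-- Key lemma: if `W₁ ⊆ c_{T₃} ⋯ c_{T_M} W₂`, `sp^{(T)}_N(W₁) ≥ 2N − α` for all `N`,
`D₁ − D₂/2 − α/2 ≥ 4`, and `Δ_{T₁} W₁, Δ_{T₂} W₂ ≤ 8εTL`, then
`L³ ≥ 2^{M−10} ε⁻² T⁻² (D₁ − D₂/2 − α/2)²`. (Here `T₁, T₂` are the matrices with
indices `0, 1 : Fin M` and `T₃,…,T_M` those with indices `2,…,M−1`.) -/
theorem stmt17 (T L M : ℕ) (hM : 2 ≤ M) (t : Fin M → Fin L → ℝ)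
    (hnz : ∀ i ℓ, t i ℓ ≠ 0) (hli : BlockLinIndepCond T L M t)
    (Ts : Fin M → Matrix (Fin T × Fin L) (Fin T × Fin L) ℝ)
    (hTs : ∀ j, Ts j = blockDiag T L (t j))
    (ε α : ℝ) (hε : 0 < ε) (hα : 0 < α)
    (W1 W2 : Submodule ℝ (Fin T × Fin L → ℝ)) (D1 D2 : ℕ)
    (hD1 : finrank ℝ ↥W1 = D1) (hD2 : finrank ℝ ↥W2 = D2)
    (hsub : W1 ≤ ((List.finRange M).drop 2).foldr (fun j acc => conT (Ts j) acc) W2)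
    (hsp : ∀ N : ℕ, ∀ W : Submodule ℝ (Fin T × Fin L → ℝ),
      W ≤ W1 → N ≤ finrank ℝ ↥W → (2 * N - α : ℝ) ≤ spT T L W)
    (hgap : (4 : ℝ) ≤ (D1 : ℝ) - (D2 : ℝ) / 2 - α / 2)
    (hw1 : (widthT (Ts ⟨0, by omega⟩) W1 : ℝ) ≤ 8 * ε * ((T : ℝ) * L))
    (hw2 : (widthT (Ts ⟨1, by omega⟩) W2 : ℝ) ≤ 8 * ε * ((T : ℝ) * L)) :
    (2 : ℝ) ^ ((M : ℤ) - 10) * ε⁻¹ ^ 2 * ((T : ℝ))⁻¹ ^ 2 *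
      ((D1 : ℝ) - (D2 : ℝ) / 2 - α / 2) ^ 2 ≤ (L : ℝ) ^ 3 := by
  classical
  have hD2_0 : (0:ℝ) ≤ D2 := Nat.cast_nonneg _
  have hD1_4 : (4:ℝ) ≤ (D1:ℝ) := by linarith
  have i0lt : (0:ℕ) < M := by omega
  have i1lt : (1:ℕ) < M := by omega
  set i0 : Fin M := ⟨0, i0lt⟩ with hi0def
  set i1 : Fin M := ⟨1, i1lt⟩ with hi1def
  set Δ1 : ℝ := (finrank ℝ ↥(W1 ⊔ W1.map (bd T L (t i0))) : ℝ) - D1 with hΔ1def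
  set Δ2 : ℝ := (finrank ℝ ↥(W2 ⊔ W2.map (bd T L (t i1))) : ℝ) - D2 with hΔ2def
  have hΔ1nn : 0 ≤ Δ1 := by
    have h : D1 ≤ finrank ℝ ↥(W1 ⊔ W1.map (bd T L (t i0))) := by
      rw [← hD1]; exact Submodule.finrank_mono le_sup_left
    have h' : (D1:ℝ) ≤ finrank ℝ ↥(W1 ⊔ W1.map (bd T L (t i0))) := by exact_mod_cast h
    rw [hΔ1def]; linarith
  have hΔ2nn : 0 ≤ Δ2 := by
    have h : D2 ≤ finrank ℝ ↥(W2 ⊔ W2.map (bd T L (t i1))) := by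
      rw [← hD2]; exact Submodule.finrank_mono le_sup_left
    have h' : (D2:ℝ) ≤ finrank ℝ ↥(W2 ⊔ W2.map (bd T L (t i1))) := by exact_mod_cast h
    rw [hΔ2def]; linarith
  have hw1' : Δ1 ≤ 8 * ε * ((T:ℝ) * L) := by
    have he : extT (Ts i0) W1 = W1 ⊔ W1.map (bd T L (t i0)) := by
      rw [extT, hTs i0]; rfl
    have hle : finrank ℝ ↥W1 ≤ finrank ℝ ↥(extT (Ts i0) W1) := by
      rw [he]; exact Submodule.finrank_mono le_sup_left
    have hcast : (widthT (Ts i0) W1 : ℝ) = Δ1 := by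
      rw [widthT, Nat.cast_sub hle, he, hD1, hΔ1def]
    rw [← hcast]
    exact hw1
  have hw2' : Δ2 ≤ 8 * ε * ((T:ℝ) * L) := by
    have he : extT (Ts i1) W2 = W2 ⊔ W2.map (bd T L (t i1)) := by
      rw [extT, hTs i1]; rfl
    have hle : finrank ℝ ↥W2 ≤ finrank ℝ ↥(extT (Ts i1) W2) := by
      rw [he]; exact Submodule.finrank_mono le_sup_left
    have hcast : (widthT (Ts i1) W2 : ℝ) = Δ2 := by
      rw [widthT, Nat.cast_sub hle, he, hD2, hΔ2def]
    rw [← hcast]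
    exact hw2
  -- The master inequality
  have master : ∀ u k2 : ℕ, L ≤ 2 ^ (M - 2) * ((u + 1) * (k2 + 1)) →
      2 * (D1:ℝ) - α ≤ D2 + 2 * u * Δ1 + k2 * Δ2 := by
    intro u k2 hLle
    set C := capSeq T L (t i0) W1 u with hCdef
    have hCle : C ≤ W1 := capSeq_le _ _ _
    have hCdim : (D1:ℝ) - u * Δ1 ≤ finrank ℝ ↥C := by
      have h := capSeq_finrank (t i0) (hnz i0) W1 u
      rw [hD1] at h
      rw [hΔ1def]
      exact h
    set PP := sumSeq T L (t i1) W2 (k2 + 1) with hPPdef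
    have hPPdim : (finrank ℝ ↥PP : ℝ) ≤ (D2:ℝ) + k2 * Δ2 := by
      have h := sumSeq_finrank (t i1) (hnz i1) W2 k2
      rw [hD2] at h
      rw [hΔ2def]
      exact h
    set chainIdx : Finset (Fin M) := Finset.univ.filter (fun i : Fin M => 2 ≤ i.val)
      with hchain
    set Gr : Finset (ℕ × ℕ × Finset (Fin M)) :=
      Finset.range (u+1) ×ˢ Finset.range (k2+1) ×ˢ chainIdx.powerset with hGdef
    have hmemGr : ∀ p : ℕ × ℕ × Finset (Fin M), p ∈ Gr →
        p.1 < u + 1 ∧ p.2.1 < k2 + 1 ∧ (∀ j ∈ p.2.2, 2 ≤ j.val) := by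
      intro p hp
      rw [hGdef, Finset.mem_product] at hp
      obtain ⟨hp1, hp2⟩ := hp
      rw [Finset.mem_product] at hp2
      obtain ⟨hp21, hp22⟩ := hp2
      refine ⟨Finset.mem_range.1 hp1, Finset.mem_range.1 hp21, fun j hj => ?_⟩
      have := Finset.mem_powerset.1 hp22 hj
      rw [hchain] at this
      exact (Finset.mem_filter.1 this).2
    have hGcard : Gr.card = (u+1) * ((k2+1) * 2 ^ (M-2)) := by
      rw [hGdef, Finset.card_product, Finset.card_product, Finset.card_range,
        Finset.card_range, Finset.card_powerset, hchain, card_chainIdx hM]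
    have hinj : Set.InjOn (encV M hM) Gr := by
      intro p hp q hq hpq
      exact encV_inj hM p q (hmemGr p hp).2.2 (hmemGr q hq).2.2 hpq
    set Γ := Gr.image (encV M hM) with hΓdef
    have hΓcard : Γ.card = (u+1) * ((k2+1) * 2 ^ (M-2)) := by
      rw [hΓdef, Finset.card_image_of_injOn hinj, hGcard]
    have hLΓ : L ≤ Γ.card := by
      rw [hΓcard]
      calc L ≤ 2 ^ (M-2) * ((u + 1) * (k2 + 1)) := hLle
        _ = (u+1) * ((k2+1) * 2 ^ (M-2)) := by ring
    obtain ⟨A, hAsub, hAcard⟩ := Finset.exists_subset_card_eq hLΓ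
    have hsupP : (⨆ x ∈ A, C.map (Matrix.toLin'
        (blockDiag T L fun ℓ => ∏ i, t i ℓ ^ x i))) ≤ PP := by
      refine iSup_le fun x => iSup_le fun hx => ?_
      obtain ⟨p, hp, rfl⟩ := Finset.mem_image.1 (hAsub hx)
      obtain ⟨m1, m2, B⟩ := p
      obtain ⟨hm1, hm2, hB⟩ := hmemGr _ hp
      have hfun := gridProd (T := T) (L := L) hM t m1 m2 B hB
      have heq : C.map (Matrix.toLin'
            (blockDiag T L fun ℓ => ∏ i, t i ℓ ^ encV M hM (m1, m2, B) i))
          = ((C.map (bd T L ((t ⟨0, by omega⟩) ^ m1))).map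
              (bd T L (∏ j ∈ B, (t j)⁻¹))).map (bd T L ((t ⟨1, by omega⟩) ^ m2)) := by
        show C.map (bd T L fun ℓ => ∏ i, t i ℓ ^ encV M hM (m1, m2, B) i) = _
        rw [show (fun ℓ => ∏ i, t i ℓ ^ encV M hM (m1, m2, B) i)
            = (t ⟨1, by omega⟩) ^ m2 * ((∏ j ∈ B, (t j)⁻¹) * (t ⟨0, by omega⟩) ^ m1)
          from hfun]
        rw [bd_mul, Submodule.map_comp, bd_mul, Submodule.map_comp]
      rw [heq]
      have s1 : C.map (bd T L ((t ⟨0, by omega⟩) ^ m1)) ≤ W1 :=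
        capSeq_map_pow (t i0) (hnz i0) W1 m1 u (Nat.lt_succ_iff.mp hm1)
      have s2 : W1.map (bd T L (∏ j ∈ B, (t j)⁻¹)) ≤ W2 :=
        chain_lem t hnz Ts hTs ((List.finRange M).drop 2) W1 W2 hsub B
          (fun j hj => mem_drop_finRange j (hB j hj))
      have s3 : W2.map (bd T L ((t ⟨1, by omega⟩) ^ m2)) ≤ PP :=
        sumSeq_map_pow (t i1) W2 m2 (k2+1) hm2
      exact le_trans (Submodule.map_mono (le_trans (Submodule.map_mono s1) s2)) s3
    have hfr : finrank ℝ ↥(⨆ x ∈ A, C.map (Matrix.toLin'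
        (blockDiag T L fun ℓ => ∏ i, t i ℓ ^ x i))) ≤ finrank ℝ ↥PP :=
      Submodule.finrank_mono hsupP
    have hspTeq := hli A hAcard C
    rw [hspTeq] at hfr
    have h1 : (spT T L C : ℝ) ≤ (finrank ℝ ↥PP : ℝ) := by exact_mod_cast hfr
    have h2 := hsp (finrank ℝ ↥C) C hCle le_rfl
    linarith
  -- endgame
  by_cases hcase : L ≤ 2 ^ (M - 2)
  · exfalso
    have h := master 0 0 (by simpa using hcase)
    push_cast at h
    linarith
  · push_neg at hcase
    set s : ℕ := 2 ^ (M - 2) with hsdef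
    have hs1 : 1 ≤ s := Nat.one_le_two_pow
    have hL1 : 1 ≤ L := by omega
    have hex : ∃ r : ℕ, L ≤ 2 * s * r ^ 2 := ⟨L, by nlinarith⟩
    set r := Nat.find hex with hrdef
    have hrspec : L ≤ 2 * s * r ^ 2 := Nat.find_spec hex
    have hminN : ∀ m : ℕ, m < r → ¬ L ≤ 2 * s * m ^ 2 := fun m hm => Nat.find_min hex hm
    clear_value r
    have hrpos : 1 ≤ r := by
      by_contra h0
      have hr0 : r = 0 := by omega
      rw [hr0] at hrspec
      simp at hrspec
      omega
    set u := r - 1 with hudef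
    have hru : r = u + 1 := by omega
    have hmin : 1 ≤ u → 2 * s * u ^ 2 < L := by
      intro hu
      have h := hminN u (by omega)
      omega
    clear hrdef hminN hex
    have hkey := master u (2*u + 1) (by
      calc L ≤ 2 * s * r ^ 2 := hrspec
        _ = s * ((u + 1) * (2*u + 1 + 1)) := by rw [hru]; ring)
    -- ℕ bound : s * (4u+1)² ≤ 16 L
    have hsc : s * (4*u+1)^2 ≤ 16 * L := by
      rcases Nat.eq_zero_or_pos u with h0 | hu
      · rw [h0]
        simpa using le_trans (le_of_lt hcase) (by omega : L ≤ 16 * L)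
      · have h2 : 2*s*u^2 < L := hmin hu
        have h8 : 8*(s*u) ≤ 7*L := by
          have e1 : s*(2*s*u^2) ≤ s*L := Nat.mul_le_mul_left s (le_of_lt h2)
          have hsq : (8*(s*u))^2 ≤ 32 * (s*L) := by
            calc (8*(s*u))^2 = 32*(s*(2*s*u^2)) := by ring
              _ ≤ 32*(s*L) := Nat.mul_le_mul_left 32 e1
          have e2 : s*L ≤ L*L := Nat.mul_le_mul_right L (le_of_lt hcase)
          have hsq3 : (8*(s*u))^2 ≤ (7*L)^2 := by
            calc (8*(s*u))^2 ≤ 32*(s*L) := hsq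
              _ ≤ 32*(L*L) := Nat.mul_le_mul_left 32 e2
              _ ≤ 49*(L*L) := Nat.mul_le_mul_right (L*L) (by omega)
              _ = (7*L)^2 := by ring
          exact (Nat.pow_le_pow_iff_left (by omega : (2:ℕ) ≠ 0)).mp hsq3
        have h2' : 2*s*u^2 ≤ L - 1 := Nat.le_sub_one_of_lt h2
        have hcase' : s ≤ L - 1 := Nat.le_sub_one_of_lt hcase
        calc s * (4*u+1)^2 = 8*(2*s*u^2) + 8*(s*u) + s := by ring
          _ ≤ 8*(L-1) + 7*L + (L-1) :=
            Nat.add_le_add (Nat.add_le_add (Nat.mul_le_mul_left 8 h2') h8) hcase'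
          _ ≤ 16 * L := by omega
    -- positivity of T
    have hT1 : 1 ≤ T := by
      have hle : finrank ℝ ↥W1 ≤ finrank ℝ (Fin T × Fin L → ℝ) := W1.finrank_le
      rw [Module.finrank_fintype_fun_eq_card, Fintype.card_prod, Fintype.card_fin,
        Fintype.card_fin] at hle
      have hD14' : 4 ≤ D1 := by exact_mod_cast hD1_4
      rw [hD1] at hle
      by_contra hT0
      have hT0' : T = 0 := by omega
      rw [hT0'] at hle
      omega
    have hTposR : (0:ℝ) < T := by exact_mod_cast hT1
    have hLposR : (0:ℝ) < L := by exact_mod_cast hL1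
    -- real form of the key inequality
    have hwb : (0:ℝ) ≤ 8 * ε * ((T:ℝ) * L) := by positivity
    have hkey' : 2*(D1:ℝ) - α ≤ D2 + (4*(u:ℝ)+1) * (8*ε*((T:ℝ)*L)) := by
      have hu0 : (0:ℝ) ≤ 2*(u:ℝ) := by positivity
      have hu1 : (0:ℝ) ≤ 2*(u:ℝ)+1 := by positivity
      have b1 : 2*(u:ℝ)*Δ1 ≤ 2*(u:ℝ)*(8*ε*((T:ℝ)*L)) := mul_le_mul_of_nonneg_left hw1' hu0
      have b2 : (2*(u:ℝ)+1)*Δ2 ≤ (2*(u:ℝ)+1)*(8*ε*((T:ℝ)*L)) := mul_le_mul_of_nonneg_left hw2' hu1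
      push_cast at hkey
      linarith
    have hg1 : (D1:ℝ) - (D2:ℝ)/2 - α/2 ≤ (4*(u:ℝ)+1) * (4*ε*((T:ℝ)*L)) := by linarith
    have hg0 : (0:ℝ) ≤ (D1:ℝ) - (D2:ℝ)/2 - α/2 := by linarith
    have hgsq : ((D1:ℝ) - (D2:ℝ)/2 - α/2)^2 ≤ ((4*(u:ℝ)+1) * (4*ε*((T:ℝ)*L)))^2 :=
      pow_le_pow_left₀ hg0 hg1 2
    have h2M : (2:ℝ) ^ ((M:ℤ) - 10) = (s:ℝ) / 256 := by
      have hiM : (M:ℤ) - 10 = ((M - 2 : ℕ) : ℤ) - 8 := by omega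
      rw [hiM, zpow_sub₀ (by norm_num : (2:ℝ) ≠ 0), zpow_natCast]
      have hsR : (s:ℝ) = 2 ^ (M - 2 : ℕ) := by rw [hsdef]; push_cast; ring
      rw [hsR]
      norm_num
    have hscR : (s:ℝ) * (4*(u:ℝ)+1)^2 ≤ 16*(L:ℝ) := by exact_mod_cast hsc
    calc (2:ℝ) ^ ((M:ℤ) - 10) * ε⁻¹ ^ 2 * ((T:ℝ))⁻¹ ^ 2 * ((D1:ℝ) - (D2:ℝ)/2 - α/2)^2
        ≤ (s:ℝ) / 256 * ε⁻¹ ^ 2 * ((T:ℝ))⁻¹ ^ 2 * ((4*(u:ℝ)+1) * (4*ε*((T:ℝ)*L)))^2 := by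
          rw [h2M]
          exact mul_le_mul_of_nonneg_left hgsq (by positivity)
      _ = ((s:ℝ) * (4*(u:ℝ)+1)^2) * ((L:ℝ)^2 / 16) := by
          field_simp
          ring
      _ ≤ (16*(L:ℝ)) * ((L:ℝ)^2 / 16) := by
          exact mul_le_mul_of_nonneg_right hscR (by positivity)
      _ = (L:ℝ)^3 := by ring
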